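/- arXiv:2203.06923 — 2 statements merged into one kernel-verified Lean document; each statement's English description precedes it below -/
import Mathlib

section
/- The kernel E(x,ρ) := c(n,s) ρ (1-|x|^2)^s / ((ρ^2-1)^s (ρ^2-|x|^2)) satisfies ∫_1^∞ E(x,ρ) dρ = 1/|∂B_1| for every x in the open unit ball, where |∂B_1| = 2π^{n/2}/Γ(n/2). -/
/-!
The substitution `t = (ρ² - 1) / (ρ² - |x|²)` maps `(1, ∞)` increasingly onto `(0, 1)` and turns
`ρ (1 - |x|²)^s / ((ρ² - 1)^s (ρ² - |x|²)) dρ` into `½ t^(-s) (1 - t)^(s-1) dt`. The integral is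
therefore `½ B(1 - s, s) = ½ Γ(1 - s) Γ(s) = π / (2 sin πs)` by Euler's reflection formula, and the
constant `c(n,s)` is chosen exactly to turn this into `Γ(n/2) / (2 π^(n/2))`.
-/

open scoped Real
open MeasureTheory Set

theorem setIntegral_Ioo_rpow_mul_one_sub_rpow {α β : ℝ} (hα : 0 < α) (hβ : 0 < β) :
    ∫ t in Ioo (0 : ℝ) 1, t ^ (α - 1) * (1 - t) ^ (β - 1) =
      Real.Gamma α * Real.Gamma β / Real.Gamma (α + β) := by
  have hB := Complex.betaIntegral_eq_Gamma_mul_div α β (by simpa) (by simpa)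
  have hint : Complex.betaIntegral α β =
      ((∫ t in Ioo (0 : ℝ) 1, t ^ (α - 1) * (1 - t) ^ (β - 1) : ℝ) : ℂ) := by
    rw [Complex.betaIntegral, intervalIntegral.integral_of_le zero_le_one,
      integral_Ioc_eq_integral_Ioo, ← integral_complex_ofReal]
    refine setIntegral_congr_fun measurableSet_Ioo fun t ⟨ht0, ht1⟩ => ?_
    push_cast
    rw [Complex.ofReal_cpow ht0.le, Complex.ofReal_cpow (sub_nonneg.2 ht1.le)]
    push_cast
    rfl
  rw [hint, ← Complex.ofReal_add, Complex.Gamma_ofReal, Complex.Gamma_ofReal,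
    Complex.Gamma_ofReal] at hB
  exact_mod_cast hB

theorem setIntegral_Ioo_rpow_neg_mul_one_sub_rpow {s : ℝ} (hs0 : 0 < s) (hs1 : s < 1) :
    ∫ t in Ioo (0 : ℝ) 1, t ^ (-s) * (1 - t) ^ (s - 1) = π / Real.sin (π * s) := by
  have h := setIntegral_Ioo_rpow_mul_one_sub_rpow (sub_pos.2 hs1) hs0
  rwa [sub_sub_cancel_left, sub_add_cancel, Real.Gamma_one, div_one, mul_comm,
    Real.Gamma_mul_Gamma_one_sub] at h

section Substitution

variable {a : ℝ}

lemma image_Ioi_one_div_sq_sub (ha : a < 1) :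
    (fun ρ : ℝ => (ρ ^ 2 - 1) / (ρ ^ 2 - a)) '' Ioi 1 = Ioo 0 1 := by
  ext t
  constructor
  · rintro ⟨ρ, hρ : 1 < ρ, rfl⟩
    have hden : 0 < ρ ^ 2 - a := by nlinarith
    exact ⟨div_pos (by nlinarith) hden, (div_lt_one hden).2 (by linarith)⟩
  · rintro ⟨ht0, ht1⟩
    have h1t : 0 < 1 - t := by linarith
    -- solve `t = (ρ² - 1) / (ρ² - a)` for `ρ² = (1 - t a) / (1 - t)`
    have hρsq : 1 < (1 - t * a) / (1 - t) := by rw [lt_div_iff₀ h1t]; nlinarith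
    refine ⟨√((1 - t * a) / (1 - t)), (Real.lt_sqrt zero_le_one).2 (by simpa using hρsq), ?_⟩
    simp only [Real.sq_sqrt (zero_le_one.trans hρsq.le)]
    have hnum : (1 - t * a) / (1 - t) - 1 = t * (1 - a) / (1 - t) := by field_simp; ring
    have hden : (1 - t * a) / (1 - t) - a = (1 - a) / (1 - t) := by field_simp; ring
    rw [hnum, hden, div_div_div_cancel_right₀ h1t.ne', mul_div_assoc,
      div_self (sub_pos.2 ha).ne', mul_one]

lemma strictMonoOn_div_sq_sub (ha : a < 1) :
    StrictMonoOn (fun ρ : ℝ => (ρ ^ 2 - 1) / (ρ ^ 2 - a)) (Ioi 1) := by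
  intro ρ (hρ : 1 < ρ) σ (hσ : 1 < σ) hρσ
  rw [div_lt_div_iff₀ (by nlinarith) (by nlinarith)]
  nlinarith [mul_lt_mul_of_pos_left (mul_self_lt_mul_self (by linarith) hρσ) (sub_pos.2 ha)]

lemma hasDerivAt_div_sq_sub {ρ : ℝ} (hρ : ρ ^ 2 - a ≠ 0) :
    HasDerivAt (fun ρ : ℝ => (ρ ^ 2 - 1) / (ρ ^ 2 - a))
      (2 * ρ * (1 - a) / (ρ ^ 2 - a) ^ 2) ρ := by
  have h := ((hasDerivAt_pow 2 ρ).sub_const 1).div ((hasDerivAt_pow 2 ρ).sub_const a) hρ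
  exact h.congr_deriv (by ring)

end Substitution

section Kernel

variable {a s : ℝ}

lemma mul_rpow_div_eq_half_abs_deriv_smul (ha : a < 1) {ρ : ℝ} (hρ : 1 < ρ) :
    ρ * (1 - a) ^ s / ((ρ ^ 2 - 1) ^ s * (ρ ^ 2 - a)) =
      1 / 2 * (|2 * ρ * (1 - a) / (ρ ^ 2 - a) ^ 2| •
        (((ρ ^ 2 - 1) / (ρ ^ 2 - a)) ^ (-s) * (1 - (ρ ^ 2 - 1) / (ρ ^ 2 - a)) ^ (s - 1))) := by
  have hA : 0 < ρ ^ 2 - 1 := by nlinarith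
  have hD : 0 < ρ ^ 2 - a := by nlinarith
  have hb : 0 < 1 - a := sub_pos.2 ha
  have h1f : 1 - (ρ ^ 2 - 1) / (ρ ^ 2 - a) = (1 - a) / (ρ ^ 2 - a) := by field_simp; ring
  rw [smul_eq_mul, abs_of_pos (by positivity), h1f, Real.div_rpow hA.le hD.le,
    Real.div_rpow hb.le hD.le, Real.rpow_neg hA.le, Real.rpow_neg hD.le,
    Real.rpow_sub_one hb.ne', Real.rpow_sub_one hD.ne']
  have hAs := Real.rpow_pos_of_pos hA s
  have hDs := Real.rpow_pos_of_pos hD s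
  field_simp

theorem setIntegral_Ioi_one_mul_rpow_div (ha : a < 1) (hs0 : 0 < s) (hs1 : s < 1) :
    ∫ ρ in Ioi (1 : ℝ), ρ * (1 - a) ^ s / ((ρ ^ 2 - 1) ^ s * (ρ ^ 2 - a)) =
      π / (2 * Real.sin (π * s)) := by
  have hsub := integral_image_eq_integral_abs_deriv_smul measurableSet_Ioi
    (fun ρ (hρ : 1 < ρ) => (hasDerivAt_div_sq_sub (by nlinarith)).hasDerivWithinAt)
    (strictMonoOn_div_sq_sub ha).injOn (fun t => t ^ (-s) * (1 - t) ^ (s - 1))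
  rw [image_Ioi_one_div_sq_sub ha, setIntegral_Ioo_rpow_neg_mul_one_sub_rpow hs0 hs1] at hsub
  rw [setIntegral_congr_fun measurableSet_Ioi fun ρ hρ => mul_rpow_div_eq_half_abs_deriv_smul ha hρ,
    integral_const_mul, ← hsub]
  ring

end Kernel

theorem stmt_12_general (n : ℕ) (s : ℝ) (hs : s ∈ Set.Ioo (0 : ℝ) 1)
    (x : EuclideanSpace ℝ (Fin n)) (hx : ‖x‖ < 1) :
    (∫ ρ in Set.Ioi (1 : ℝ),
        (Real.Gamma (n / 2) * Real.sin (π * s) / π ^ ((n : ℝ) / 2 + 1)) *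
          ρ * (1 - ‖x‖ ^ 2) ^ s / ((ρ ^ 2 - 1) ^ s * (ρ ^ 2 - ‖x‖ ^ 2)))
    = 1 / (2 * π ^ ((n : ℝ) / 2) / Real.Gamma (n / 2)) := by
  obtain ⟨hs0, hs1⟩ := hs
  have hx2 : ‖x‖ ^ 2 < 1 := pow_lt_one₀ (norm_nonneg x) hx two_ne_zero
  have hsin : Real.sin (π * s) ≠ 0 :=
    (Real.sin_pos_of_pos_of_lt_pi (by positivity) (by nlinarith [Real.pi_pos])).ne'
  set C := Real.Gamma (n / 2) * Real.sin (π * s) / π ^ ((n : ℝ) / 2 + 1) with hC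
  simp_rw [mul_assoc C, mul_div_assoc C]
  rw [integral_const_mul, hC, setIntegral_Ioi_one_mul_rpow_div hx2 hs0 hs1,
    Real.rpow_add_one Real.pi_ne_zero, one_div_div]
  have hπ := (Real.rpow_pos_of_pos Real.pi_pos ((n : ℝ) / 2)).ne'
  field_simp

theorem stmt_12 (n : ℕ) (hn : 2 ≤ n) (s : ℝ) (hs : s ∈ Set.Ioo (0 : ℝ) 1)
    (x : EuclideanSpace ℝ (Fin n)) (hx : ‖x‖ < 1) :
    (∫ ρ in Set.Ioi (1 : ℝ),
        (Real.Gamma (n / 2) * Real.sin (π * s) / π ^ ((n : ℝ) / 2 + 1)) *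
          ρ * (1 - ‖x‖ ^ 2) ^ s / ((ρ ^ 2 - 1) ^ s * (ρ ^ 2 - ‖x‖ ^ 2)))
    = 1 / (2 * π ^ ((n : ℝ) / 2) / Real.Gamma (n / 2)) :=
  stmt_12_general n s hs x hx
end

section
/- Optimality of the Harnack constants via concentrating data: fix e ∈ ∂B_1, r ∈ (0,1), and for ε > 0 let u_ε(x) := c(n,s)(1-|x|^2)^s ∫_{B_ε((1+ε)e)} |y-x|^{-n} dy. Then u_ε(0)/u_ε(-re) → (1+r)^n/(1-r^2)^s as ε → 0. -/
/-!
Writing the integral over the small ball as its volume times the average of the kernel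
`y ↦ |y - x|^{-n}`, the volumes and the constant `c(n,s)` cancel in the ratio. As `ε → 0` the
balls `B_ε((1+ε)e)` shrink to the boundary point `e`, where the kernel is continuous for every
`x ∈ B_1`, so the averages converge to `|e - x|^{-n}`: this is `1` at `x = 0` and `(1+r)^{-n}`
at `x = -re`. Only the weight `(1 - |x|^2)^s`, equal to `(1 - r^2)^s` at `-re`, remains.
-/

open scoped Real Topology ENNReal
open MeasureTheory Metric Filter

theorem tendsto_setAverage_ball_of_eventually_continuousAt {α ι : Type*} [MetricSpace α]
    [ProperSpace α] [MeasurableSpace α] [OpensMeasurableSpace α] {μ : Measure α}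
    [IsFiniteMeasureOnCompacts μ] [μ.IsOpenPosMeasure] {f : α → ℝ} {p : α}
    (hf : ∀ᶠ y in 𝓝 p, ContinuousAt f y) {l : Filter ι} {c : ι → α} {ρ : ι → ℝ}
    (hc : Tendsto c l (𝓝 p)) (hρ : Tendsto ρ l (𝓝[>] 0)) :
    Tendsto (fun i ↦ ⨍ y in ball (c i) (ρ i), f y ∂μ) l (𝓝 (f p)) := by
  rw [Metric.tendsto_nhds]
  intro δ hδ
  obtain ⟨η, hη, hball⟩ : ∃ η > 0, ∀ y ∈ ball p η, ContinuousAt f y ∧ dist (f y) (f p) < δ :=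
    Metric.eventually_nhds_iff_ball.mp
      (hf.and (hf.self_of_nhds.eventually (ball_mem_nhds (f p) hδ)))
  have hsub : ∀ᶠ i in l, closedBall (c i) (ρ i) ⊆ ball p η := by
    filter_upwards [Metric.tendsto_nhds.mp hc (η / 2) (half_pos hη),
      Metric.tendsto_nhds.mp (hρ.mono_right nhdsWithin_le_nhds) (η / 2) (half_pos hη)]
      with i hci hρi
    rw [Real.dist_0_eq_abs] at hρi
    exact closedBall_subset_ball' (by linarith [le_abs_self (ρ i)])
  filter_upwards [hsub, hρ self_mem_nhdsWithin] with i hsub (hρi : 0 < ρ i)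
  have hint : IntegrableOn f (ball (c i) (ρ i)) μ :=
    (ContinuousOn.integrableOn_compact (isCompact_closedBall _ _)
      fun y hy ↦ (hball y (hsub hy)).1.continuousWithinAt).mono_set ball_subset_closedBall
  have h0 : μ (ball (c i) (ρ i)) ≠ 0 := (measure_ball_pos μ _ hρi).ne'
  have htop : μ (ball (c i) (ρ i)) ≠ ∞ := measure_ball_lt_top.ne
  -- the average lies between two values of `f` taken in the ball, both `δ`-close to `f p`
  obtain ⟨x, hx, hx_le⟩ := exists_le_setAverage h0 htop hint
  obtain ⟨x', hx', le_hx'⟩ := exists_setAverage_le h0 htop hint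
  have hfx := (hball x (hsub (ball_subset_closedBall hx))).2
  have hfx' := (hball x' (hsub (ball_subset_closedBall hx'))).2
  rw [Real.dist_eq, abs_lt] at hfx hfx' ⊢
  constructor <;> linarith

theorem continuousAt_inv_norm_sub_pow {E : Type*} [NormedAddCommGroup E] {x y : E} (hy : y ≠ x)
    (n : ℕ) : ContinuousAt (fun z ↦ (‖z - x‖ ^ n)⁻¹) y :=
  ((continuous_id.sub continuous_const).norm.pow n).continuousAt.inv₀
    (pow_ne_zero n (norm_ne_zero_iff.mpr (sub_ne_zero.mpr hy)))

theorem tendsto_setAverage_ball_inv_norm_sub_pow {E : Type*} [NormedAddCommGroup E]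
    [NormedSpace ℝ E] [ProperSpace E] [MeasurableSpace E] [BorelSpace E] {μ : Measure E}
    [IsFiniteMeasureOnCompacts μ] [μ.IsOpenPosMeasure] {e x : E} (hx : x ≠ e) (n : ℕ) :
    Tendsto (fun ε : ℝ ↦ ⨍ y in ball ((1 + ε) • e) ε, (‖y - x‖ ^ n)⁻¹ ∂μ) (𝓝[>] 0)
      (𝓝 (‖e - x‖ ^ n)⁻¹) := by
  refine tendsto_setAverage_ball_of_eventually_continuousAt ?_ ?_ tendsto_id
  · filter_upwards [isOpen_ne.mem_nhds hx.symm] with y hy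
    exact continuousAt_inv_norm_sub_pow hy n
  · have hcont : Continuous fun ε : ℝ ↦ (1 + ε) • e := by fun_prop
    simpa using (hcont.tendsto 0).mono_left nhdsWithin_le_nhds

theorem mul_setIntegral_div_mul_setIntegral {α : Type*} [MeasurableSpace α] {μ : Measure α}
    {s : Set α} (hs₀ : μ s ≠ 0) (hs : μ s ≠ ∞) {c : ℝ} (hc : c ≠ 0) (a b : ℝ) (f g : α → ℝ) :
    (c * a * ∫ y in s, f y ∂μ) / (c * b * ∫ y in s, g y ∂μ) =
      a * (⨍ y in s, f y ∂μ) / (b * ⨍ y in s, g y ∂μ) := by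
  have hV : μ.real s ≠ 0 := ENNReal.toReal_ne_zero.mpr ⟨hs₀, hs⟩
  simp only [← measure_smul_setAverage _ hs, smul_eq_mul]
  rw [mul_assoc c, mul_assoc c, mul_div_mul_left _ _ hc, mul_left_comm a, mul_left_comm b,
    mul_div_mul_left _ _ hV]

theorem Real.Gamma_mul_sin_div_pi_rpow_pos {a s : ℝ} (ha : 0 < a) (hs : s ∈ Set.Ioo (0 : ℝ) 1)
    (b : ℝ) : 0 < Real.Gamma a * Real.sin (π * s) / π ^ b := by
  have := Real.Gamma_pos_of_pos ha
  have := Real.sin_pos_of_pos_of_lt_pi (mul_pos Real.pi_pos hs.1)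
    (mul_lt_of_lt_one_right Real.pi_pos hs.2)
  positivity

theorem stmt_19 (n : ℕ) (hn : 2 ≤ n) (s r : ℝ) (hs : s ∈ Set.Ioo (0 : ℝ) 1)
    (hr : r ∈ Set.Ioo (0 : ℝ) 1) (e : EuclideanSpace ℝ (Fin n)) (he : ‖e‖ = 1) :
    let c := Real.Gamma (n / 2) * Real.sin (π * s) / π ^ ((n : ℝ) / 2 + 1)
    let u : ℝ → EuclideanSpace ℝ (Fin n) → ℝ := fun ε x =>
      c * (1 - ‖x‖ ^ 2) ^ s *
        ∫ y in Metric.ball ((1 + ε) • e) ε, (‖y - x‖ ^ n)⁻¹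
    Filter.Tendsto (fun ε => u ε 0 / u ε (-(r • e))) (𝓝[>] (0 : ℝ))
      (𝓝 ((1 + r) ^ n / (1 - r ^ 2) ^ s)) := by
  intro c u
  obtain ⟨hr0, hr1⟩ := hr
  have hc : c ≠ 0 := (Real.Gamma_mul_sin_div_pi_rpow_pos (by positivity) hs _).ne'
  have hk : 0 < (1 - r ^ 2) ^ s := Real.rpow_pos_of_pos (by nlinarith) s
  have hnorm : ‖-(r • e)‖ = r := by rw [norm_neg, norm_smul, he, Real.norm_of_nonneg hr0.le, mul_one]
  have hdist : ‖e - -(r • e)‖ = 1 + r := by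
    rw [sub_neg_eq_add, show e + r • e = (1 + r) • e by rw [add_smul, one_smul], norm_smul, he,
      mul_one, Real.norm_of_nonneg (by linarith)]
  have hlim₀ : Tendsto (fun ε : ℝ ↦ ⨍ y in ball ((1 + ε) • e) ε, (‖y - 0‖ ^ n)⁻¹) (𝓝[>] 0)
      (𝓝 1) := by
    simpa [he] using tendsto_setAverage_ball_inv_norm_sub_pow (μ := volume)
      (fun h : 0 = e ↦ by simp [← h] at he) n
  have hlimᵣ : Tendsto (fun ε : ℝ ↦ ⨍ y in ball ((1 + ε) • e) ε, (‖y - -(r • e)‖ ^ n)⁻¹)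
      (𝓝[>] 0) (𝓝 ((1 + r) ^ n)⁻¹) := by
    simpa only [hdist] using tendsto_setAverage_ball_inv_norm_sub_pow (μ := volume)
      (fun h : -(r • e) = e ↦ by rw [h, he] at hnorm; linarith) n
  have hratio : ∀ᶠ ε in 𝓝[>] (0 : ℝ),
      (⨍ y in ball ((1 + ε) • e) ε, (‖y - 0‖ ^ n)⁻¹) /
        ((1 - r ^ 2) ^ s * ⨍ y in ball ((1 + ε) • e) ε, (‖y - -(r • e)‖ ^ n)⁻¹) =
      u ε 0 / u ε (-(r • e)) := by
    filter_upwards [self_mem_nhdsWithin] with ε (hε : 0 < ε)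
    rw [mul_setIntegral_div_mul_setIntegral (measure_ball_pos volume _ hε).ne'
      measure_ball_lt_top.ne hc, norm_zero, hnorm, zero_pow two_ne_zero, sub_zero,
      Real.one_rpow, one_mul]
  convert (hlim₀.div (hlimᵣ.const_mul _) (by positivity)).congr' hratio using 2
  field_simp
end
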